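/- In the noise-free setting under Assumption 1, let A ⊆ A† with B = A†∖A, let d ∈ ℝ^p have |d_i| = λ for all i ∈ A, let x_A = (Ψ_AᵗΨ_A)⁻¹(Ψ_Aᵗ y − d_A), and let i_A be an index maximizing |x†_i| over i ∈ A^c. Then ‖x_A + d_A − x†_A‖₂ ≤ ¼|x†_{i_A}| + ¼λ. -/

import Mathlib

open Matrix

/-- The submatrix `Ψ_A` of `Ψ` consisting of the columns indexed by `A`. -/
def colSub {n p : ℕ} (Ψ : Matrix (Fin n) (Fin p) ℝ) (A : Finset (Fin p)) :
    Matrix (Fin n) {i // i ∈ A} ℝ :=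
  Matrix.of fun i j => Ψ i j.1

/-- `Ψ` satisfies the restricted isometry property of order `k` with constant `δ`:
`(1 − δ)‖x‖₂² ≤ ‖Ψx‖₂² ≤ (1 + δ)‖x‖₂²` for all `x` with at most `k` nonzero entries. -/
def HasRIP {n p : ℕ} (Ψ : Matrix (Fin n) (Fin p) ℝ) (k : ℕ) (δ : ℝ) : Prop :=
  ∀ x : Fin p → ℝ, (Finset.univ.filter (fun i => x i ≠ 0)).card ≤ k →
    (1 - δ) * (∑ i, x i ^ 2) ≤ ∑ j, (Ψ *ᵥ x) j ^ 2 ∧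
      ∑ j, (Ψ *ᵥ x) j ^ 2 ≤ (1 + δ) * (∑ i, x i ^ 2)


/-!
Put `e = x_A + d_A − x†_A` and let `W` agree with `d` on `A` and with `x†` off `A`. The normal
equations `Ψ_Aᵀ Ψ_A x_A = Ψ_Aᵀ y − d_A` turn `‖Ψ_A e‖²` into `⟨Ψ_A e, Ψ W⟩ − ⟨e, W_A⟩`. Both `e`
(extended by zero) and `W` are supported in `A†`, so the RIP bounds `‖Ψ_A e‖²` below by
`(1 − δ)‖e‖²` and, after polarization, the right-hand side above by
`δ ‖e‖ ‖W‖ ≤ δ √T (|x†_{i_A}| + λ) ‖e‖`. Assumption 1 is exactly `δ √T / (1 − δ) ≤ 1/4`.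
-/

open Finset

def zeroExtend {p : ℕ} (A : Finset (Fin p)) (v : A → ℝ) : Fin p → ℝ :=
  fun i => if h : i ∈ A then v ⟨i, h⟩ else 0

section zeroExtend

variable {p : ℕ} {A : Finset (Fin p)}

lemma zeroExtend_eq_zero_of_notMem (v : A → ℝ) (i : Fin p) (hi : i ∉ A) :
    zeroExtend A v i = 0 := by
  simp [zeroExtend, hi]

lemma zeroExtend_dotProduct (v : A → ℝ) (w : Fin p → ℝ) :
    zeroExtend A v ⬝ᵥ w = v ⬝ᵥ fun j => w j := by
  rw [dotProduct, ← sum_subset A.subset_univ fun i _ hi => by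
    rw [zeroExtend_eq_zero_of_notMem v i hi, zero_mul]]
  exact (sum_coe_sort A _).symm.trans (sum_congr rfl fun j _ => by simp [zeroExtend])

lemma zeroExtend_dotProduct_zeroExtend (u v : A → ℝ) :
    zeroExtend A u ⬝ᵥ zeroExtend A v = u ⬝ᵥ v := by
  rw [zeroExtend_dotProduct]
  congr 1
  funext j
  simp [zeroExtend]

lemma mulVec_zeroExtend {n : ℕ} (Ψ : Matrix (Fin n) (Fin p) ℝ) (v : A → ℝ) :
    Ψ *ᵥ zeroExtend A v = colSub Ψ A *ᵥ v := by
  funext i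
  rw [mulVec, dotProduct_comm, zeroExtend_dotProduct, dotProduct_comm]
  rfl

end zeroExtend

lemma dotProduct_self_le {ι : Type*} [Fintype ι] {S : Finset ι} {x : ι → ℝ} {c : ℝ}
    (hx : ∀ i ∉ S, x i = 0) (hc : ∀ i ∈ S, |x i| ≤ c) :
    x ⬝ᵥ x ≤ #S * c ^ 2 := by
  rw [dotProduct, ← sum_subset S.subset_univ fun i _ hi => by rw [hx i hi, zero_mul],
    ← nsmul_eq_mul]
  refine sum_le_card_nsmul _ _ _ fun i hi => ?_
  rw [← sq, ← sq_abs]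
  exact pow_le_pow_left₀ (abs_nonneg _) (hc i hi) 2

lemma sqrt_dotProduct_self_le {ι : Type*} [Fintype ι] {S : Finset ι} {x : ι → ℝ} {c : ℝ}
    (hc0 : 0 ≤ c) (hx : ∀ i ∉ S, x i = 0) (hc : ∀ i ∈ S, |x i| ≤ c) :
    √(x ⬝ᵥ x) ≤ √(#S) * c := by
  rw [← Real.sqrt_sq hc0, ← Real.sqrt_mul (Nat.cast_nonneg _)]
  exact Real.sqrt_le_sqrt (dotProduct_self_le hx hc)

lemma dotProduct_mulVec_self_of_normal_eq {m ι : Type*} [Fintype m] [Fintype ι]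
    {C : Matrix m ι ℝ} {x d z : ι → ℝ} {y : m → ℝ} (h : Cᵀ *ᵥ (C *ᵥ x) = Cᵀ *ᵥ y - d) :
    C *ᵥ (x + z) ⬝ᵥ C *ᵥ (x + z) = C *ᵥ (x + z) ⬝ᵥ (y + C *ᵥ z) - (x + z) ⬝ᵥ d := by
  have hCt : ∀ w, C *ᵥ (x + z) ⬝ᵥ w = (x + z) ⬝ᵥ Cᵀ *ᵥ w := fun w => by
    rw [dotProduct_mulVec, vecMul_transpose]
  rw [hCt, hCt, mulVec_add C, mulVec_add Cᵀ, h, mulVec_add Cᵀ, ← dotProduct_sub]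
  congr 1
  abel

namespace HasRIP

variable {n p k : ℕ} {Ψ : Matrix (Fin n) (Fin p) ℝ} {δ : ℝ} {S : Finset (Fin p)}

lemma abs_sub_le (h : HasRIP Ψ k δ) (hS : #S ≤ k) {x : Fin p → ℝ} (hx : ∀ i ∉ S, x i = 0) :
    |Ψ *ᵥ x ⬝ᵥ Ψ *ᵥ x - x ⬝ᵥ x| ≤ δ * (x ⬝ᵥ x) := by
  have hsupp : #{i | x i ≠ 0} ≤ k := by
    refine (card_le_card fun i hi => ?_).trans hS
    by_contra hiS
    exact (mem_filter.1 hi).2 (hx i hiS)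
  obtain ⟨hlow, hup⟩ := h x hsupp
  simp only [dotProduct, ← sq]
  rw [abs_le]
  constructor <;> linarith

lemma one_sub_mul_le (h : HasRIP Ψ k δ) (hS : #S ≤ k) {x : Fin p → ℝ} (hx : ∀ i ∉ S, x i = 0) :
    (1 - δ) * (x ⬝ᵥ x) ≤ Ψ *ᵥ x ⬝ᵥ Ψ *ᵥ x := by
  linarith [(abs_le.1 (h.abs_sub_le hS hx)).1]

/-- Polarization of `abs_sub_le`, applied to `b • u ± a • v` with `a = ‖u‖`, `b = ‖v‖`. -/
lemma dotProduct_sub_le (h : HasRIP Ψ k δ) (hS : #S ≤ k) {u v : Fin p → ℝ}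
    (hu : ∀ i ∉ S, u i = 0) (hv : ∀ i ∉ S, v i = 0) :
    Ψ *ᵥ u ⬝ᵥ Ψ *ᵥ v - u ⬝ᵥ v ≤ δ * √(u ⬝ᵥ u) * √(v ⬝ᵥ v) := by
  set a := √(u ⬝ᵥ u)
  set b := √(v ⬝ᵥ v)
  have ha : a ^ 2 = u ⬝ᵥ u := Real.sq_sqrt (dotProduct_self_star_nonneg u)
  have hb : b ^ 2 = v ⬝ᵥ v := Real.sq_sqrt (dotProduct_self_star_nonneg v)
  by_cases ha0 : a = 0
  · simp [ha0, dotProduct_self_eq_zero.1 (by rw [← ha, ha0, sq, zero_mul] : u ⬝ᵥ u = 0)]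
  by_cases hb0 : b = 0
  · simp [hb0, dotProduct_self_eq_zero.1 (by rw [← hb, hb0, sq, zero_mul] : v ⬝ᵥ v = 0)]
  have hP := h.abs_sub_le hS (x := b • u + a • v) fun i hi => by simp [hu i hi, hv i hi]
  have hQ := h.abs_sub_le hS (x := b • u - a • v) fun i hi => by simp [hu i hi, hv i hi]
  simp only [mulVec_add, mulVec_sub, mulVec_smul, dotProduct_add, add_dotProduct,
    dotProduct_sub, sub_dotProduct, dotProduct_smul, smul_dotProduct, smul_eq_mul,
    dotProduct_comm v u, dotProduct_comm (Ψ *ᵥ v) (Ψ *ᵥ u), ← ha, ← hb] at hP hQ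
  rw [abs_le] at hP hQ
  have hab : 0 < a * b := by positivity
  nlinarith

lemma isUnit_det_gram (h : HasRIP Ψ k δ) (hδ : δ < 1) {A : Finset (Fin p)} (hA : #A ≤ k) :
    IsUnit ((colSub Ψ A)ᵀ * colSub Ψ A).det := by
  rw [← isUnit_iff_isUnit_det, ← mulVec_injective_iff_isUnit]
  intro x x' hxx'
  have hker : ((colSub Ψ A)ᵀ * colSub Ψ A) *ᵥ (x - x') = 0 := by rw [mulVec_sub, hxx', sub_self]
  rw [← sub_eq_zero]
  generalize x - x' = w at hker ⊢
  have hgram : colSub Ψ A *ᵥ w ⬝ᵥ colSub Ψ A *ᵥ w = 0 := by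
    rw [← dotProduct_transpose_mulVec, mulVec_mulVec, hker, dotProduct_zero]
  have hlow := h.one_sub_mul_le hA (zeroExtend_eq_zero_of_notMem w)
  rw [zeroExtend_dotProduct_zeroExtend, mulVec_zeroExtend, hgram] at hlow
  exact dotProduct_self_eq_zero.1
    (le_antisymm (nonpos_of_mul_nonpos_right hlow (sub_pos.2 hδ)) (dotProduct_self_star_nonneg w))

lemma one_sub_mul_le_of_normal_eq (h : HasRIP Ψ k δ) (hS : #S ≤ k) {A : Finset (Fin p)} (hA : A ⊆ S)
    {x e : A → ℝ} {d x₀ : Fin p → ℝ} (hx₀ : ∀ i ∉ S, x₀ i = 0)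
    (hnormal : (colSub Ψ A)ᵀ *ᵥ (colSub Ψ A *ᵥ x) = (colSub Ψ A)ᵀ *ᵥ (Ψ *ᵥ x₀) - fun j : A => d j)
    (he : e = x + fun j : A => d j - x₀ j) :
    (1 - δ) * (e ⬝ᵥ e) ≤ δ * √(e ⬝ᵥ e) * √(A.piecewise d x₀ ⬝ᵥ A.piecewise d x₀) := by
  set W := A.piecewise d x₀
  rw [← zeroExtend_dotProduct_zeroExtend e e]
  set E := zeroExtend A e
  have hE : ∀ i ∉ S, E i = 0 := fun i hi => zeroExtend_eq_zero_of_notMem _ i (hi <| hA ·)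
  have hW : ∀ i ∉ S, W i = 0 := fun i hi => by
    have hiA : i ∉ A := (hi <| hA ·)
    simpa [W, hiA] using hx₀ i hi
  have hΨW : Ψ *ᵥ x₀ + colSub Ψ A *ᵥ (fun j : A => d j - x₀ j) = Ψ *ᵥ W := by
    rw [← mulVec_zeroExtend, ← mulVec_add]
    congr 1
    funext i
    by_cases hi : i ∈ A <;> simp [zeroExtend, W, hi]
  have hEW : e ⬝ᵥ (fun j : A => d j) = E ⬝ᵥ W := by
    rw [zeroExtend_dotProduct]
    simp [W]
  calc (1 - δ) * (E ⬝ᵥ E) ≤ Ψ *ᵥ E ⬝ᵥ Ψ *ᵥ E := h.one_sub_mul_le hS hE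
    _ = Ψ *ᵥ E ⬝ᵥ Ψ *ᵥ W - E ⬝ᵥ W := by
      rw [mulVec_zeroExtend, ← hΨW, ← hEW, he]
      exact dotProduct_mulVec_self_of_normal_eq hnormal
    _ ≤ δ * √(E ⬝ᵥ E) * √(W ⬝ᵥ W) := h.dotProduct_sub_le hS hE hW

end HasRIP

lemma le_div_four_of_mul_sq_le {δ s c N M : ℝ} (hδ0 : 0 ≤ δ) (hδ1 : δ < 1)
    (hδs : δ ≤ 1 / (4 * s + 1)) (hs : 0 ≤ s) (hc : 0 ≤ c) (hN : 0 ≤ N)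
    (h : (1 - δ) * N ^ 2 ≤ δ * N * M) (hM : M ≤ s * c) :
    N ≤ c / 4 := by
  rcases hN.eq_or_lt with rfl | hN
  · positivity
  have hNM : (1 - δ) * N ≤ δ * M := by nlinarith
  have h4 : 4 * (δ * s) ≤ 1 - δ := by
    rw [le_div_iff₀ (by positivity)] at hδs
    linarith
  nlinarith

theorem stmt_11_general {n p : ℕ} (Ψ : Matrix (Fin n) (Fin p) ℝ)
    (xdag : Fin p → ℝ) (Adag : Finset (Fin p))
    (hAdag : Adag = Finset.univ.filter (fun i => xdag i ≠ 0))
    (T : ℕ) (hT : T = Adag.card)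
    (y : Fin n → ℝ) (hy : y = Ψ *ᵥ xdag)
    (δ : ℝ) (hδ0 : 0 < δ) (hδ1 : δ < 1)
    (hRIP : HasRIP Ψ (T + 1) δ)
    (hAss1 : δ ≤ 1 / (4 * Real.sqrt T + 1))
    (lam : ℝ) (hlam : 0 < lam)
    (A : Finset (Fin p)) (hA : A ⊆ Adag)
    (d : Fin p → ℝ) (hdA : ∀ i ∈ A, |d i| = lam)
    (xA : {i // i ∈ A} → ℝ)
    (hxA : xA = ((colSub Ψ A)ᵀ * colSub Ψ A)⁻¹ *ᵥ ((colSub Ψ A)ᵀ *ᵥ y - fun j => d j.1))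
    (iA : Fin p) (hmax : ∀ j ∉ A, |xdag j| ≤ |xdag iA|) :
    Real.sqrt (∑ j : {i // i ∈ A}, (xA j + d j.1 - xdag j.1) ^ 2) ≤
      1 / 4 * |xdag iA| + 1 / 4 * lam := by
  have hcard : #Adag ≤ T + 1 := hT ▸ Nat.le_succ _
  have hxdag : ∀ i ∉ Adag, xdag i = 0 := by simp [hAdag]
  have hnormal : (colSub Ψ A)ᵀ *ᵥ (colSub Ψ A *ᵥ xA) = (colSub Ψ A)ᵀ *ᵥ y - fun j : A => d j := by
    rw [hxA, mulVec_mulVec, mulVec_mulVec,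
      mul_nonsing_inv _ (hRIP.isUnit_det_gram hδ1 ((card_le_card hA).trans hcard)), one_mulVec]
  set e := xA + fun j : A => d j - xdag j
  have hkey := hRIP.one_sub_mul_le_of_normal_eq hcard hA hxdag (hy ▸ hnormal) rfl
  have hWle : √(A.piecewise d xdag ⬝ᵥ A.piecewise d xdag) ≤ √T * (|xdag iA| + lam) := by
    refine hT ▸ sqrt_dotProduct_self_le (by positivity) (fun i hi => ?_) fun i _ => ?_
    · rw [piecewise_eq_of_notMem _ _ _ (hi <| hA ·), hxdag i hi]
    by_cases hi : i ∈ A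
    · simp [hi, hdA i hi]
    · rw [piecewise_eq_of_notMem _ _ _ hi]
      linarith [hmax i hi]
  have hsum : ∑ j : A, (xA j + d j - xdag j) ^ 2 = e ⬝ᵥ e := by
    simp only [e, dotProduct, Pi.add_apply, sq, add_sub_assoc]
  rw [hsum]
  refine (le_div_four_of_mul_sq_le hδ0.le hδ1 hAss1 (by positivity) (by positivity)
    (Real.sqrt_nonneg _) ?_ hWle).trans_eq (by ring)
  rwa [Real.sq_sqrt (x := e ⬝ᵥ e) (dotProduct_self_star_nonneg e)]

/-- under Assumption 1, the active-set error is bounded by `¼|x†_{i_A}| + ¼λ`. -/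
theorem stmt_11 {n p : ℕ} (Ψ : Matrix (Fin n) (Fin p) ℝ)
    (xdag : Fin p → ℝ) (Adag : Finset (Fin p))
    (hAdag : Adag = Finset.univ.filter (fun i => xdag i ≠ 0))
    (T : ℕ) (hT : T = Adag.card)
    (y : Fin n → ℝ) (hy : y = Ψ *ᵥ xdag)
    (δ : ℝ) (hδ0 : 0 < δ) (hδ1 : δ < 1)
    (hRIP : HasRIP Ψ (T + 1) δ)
    (hAss1 : δ ≤ 1 / (4 * Real.sqrt T + 1))
    (lam : ℝ) (hlam : 0 < lam)
    (A : Finset (Fin p)) (hA : A ⊆ Adag)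
    (B : Finset (Fin p)) (hB : B = Adag \ A)
    (d : Fin p → ℝ) (hdA : ∀ i ∈ A, |d i| = lam)
    (xA : {i // i ∈ A} → ℝ)
    (hxA : xA = ((colSub Ψ A)ᵀ * colSub Ψ A)⁻¹ *ᵥ ((colSub Ψ A)ᵀ *ᵥ y - fun j => d j.1))
    (iA : Fin p) (hiA : iA ∉ A) (hmax : ∀ j ∉ A, |xdag j| ≤ |xdag iA|) :
    Real.sqrt (∑ j : {i // i ∈ A}, (xA j + d j.1 - xdag j.1) ^ 2) ≤
      1 / 4 * |xdag iA| + 1 / 4 * lam :=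
  stmt_11_general Ψ xdag Adag hAdag T hT y hy δ hδ0 hδ1 hRIP hAss1 lam hlam A hA d hdA xA hxA iA
    hmax
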